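/- Let F be a homogeneous polynomial of degree 3 over ℂ in x_0, x_1, x_2, x_3 such that neither of the binary cubics G_1(y,z) := F(0,0,y,z) and G_2(y,z) := F(0,y,0,z) is of the form c·ℓ(y,z)^3 for a scalar c and a linear form ℓ. Let t ∈ ℂ with t ≠ 0 and f := x_4^3 − F(x_0,x_1,x_2,x_3) + x_5·(x_0·x_3 − x_1·x_2) + t·x_0·x_5^2. Then there is no 3-dimensional linear subspace V ⊆ ℂ^6 with e_5 ∈ V on which f vanishes identically. (The cyclic cubic fourfold Y_{F,t} contains no plane through the point p_0.) -/

import Mathlib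

/-!
Restricting `f` to the line through `v` and `e₅` gives a quadratic polynomial in the parameter
`s` whose coefficients are `t·v₀`, `v₀v₃ − v₁v₂ + 2t·v₀v₅` and `f(v)`. So on a plane `V ∋ e₅`
inside `Y_{F,t}` we get `x₀ = 0`, `x₁x₂ = 0` and `x₄³ = F(0,x₁,x₂,x₃)`. Since `V` is not the
union of two proper subspaces, `x₁` or `x₂` vanishes on all of `V`, say `x₁`. Then
`(x₂, x₃) : V → ℂ²` has kernel inside `ℂ·e₅` (on it `x₄³ = F(0) = 0`), hence is onto as
`dim V = 3`, and `x₄³ = G₁(x₂, x₃)` on `V` exhibits `G₁` as the cube of the linear form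
`(y, z) ↦ x₄(y·u + z·w)`, where `u, w ∈ V` are lifts of the standard basis of `ℂ²`.
-/

open MvPolynomial Module

/-- The cubic form `f = x₄³ − F(x₀,x₁,x₂,x₃) + x₅(x₀x₃ − x₁x₂) + t·x₀x₅²` defining the
cyclic cubic fourfold `Y_{F,t} ⊂ ℙ⁵`. -/
noncomputable def fPoly (F : MvPolynomial (Fin 4) ℂ) (t : ℂ) : MvPolynomial (Fin 6) ℂ :=
  X 4 ^ 3 - rename (Fin.castLE (by norm_num)) F
    + X 5 * (X 0 * X 3 - X 1 * X 2) + C t * X 0 * X 5 ^ 2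

/-- The vector `e₅ = (0,0,0,0,0,1)`, representing the point `p₀ = [0:0:0:0:0:1]`. -/
def e5 : Fin 6 → ℂ := ![0, 0, 0, 0, 0, 1]

theorem Submodule.le_ker_or_le_ker_of_forall_mul_eq_zero {R M : Type*} [Semiring R]
    [NoZeroDivisors R] [AddCommMonoid M] [Module R M] {V : Submodule R M} {ℓ₁ ℓ₂ : M →ₗ[R] R}
    (h : ∀ v ∈ V, ℓ₁ v * ℓ₂ v = 0) : V ≤ LinearMap.ker ℓ₁ ∨ V ≤ LinearMap.ker ℓ₂ := by
  by_contra! hne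
  obtain ⟨⟨a, ha, ha₁⟩, ⟨b, hb, hb₂⟩⟩ := And.imp Set.not_subset.mp Set.not_subset.mp hne
  rw [SetLike.mem_coe, LinearMap.mem_ker] at ha₁ hb₂
  have ha₂ : ℓ₂ a = 0 := (mul_eq_zero.mp (h a ha)).resolve_left ha₁
  have hb₁ : ℓ₁ b = 0 := (mul_eq_zero.mp (h b hb)).resolve_right hb₂
  have hab := h (a + b) (V.add_mem ha hb)
  simp only [map_add, ha₂, hb₁, add_zero, zero_add] at hab
  exact mul_ne_zero ha₁ hb₂ hab

theorem Submodule.map_eq_top_of_inf_ker_le_span_singleton {K M W : Type*} [Field K]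
    [AddCommGroup M] [Module K M] [AddCommGroup W] [Module K W] [FiniteDimensional K W]
    {V : Submodule K M} [FiniteDimensional K V] {ψ : M →ₗ[K] W} {e : M}
    (hV : finrank K V = finrank K W + 1) (hker : V ⊓ LinearMap.ker ψ ≤ K ∙ e) :
    V.map ψ = ⊤ := by
  have hrank := (ψ.domRestrict V).finrank_range_add_finrank_ker
  have hker_le : finrank K (LinearMap.ker (ψ.domRestrict V)) ≤ 1 := calc
    _ = finrank K (V ⊓ LinearMap.ker ψ : Submodule K M) := by
      rw [LinearMap.ker_domRestrict, ← Submodule.map_comap_subtype,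
        Submodule.finrank_map_subtype_eq]
    _ ≤ finrank K (K ∙ e) := Submodule.finrank_mono hker
    _ ≤ 1 := by simpa using finrank_span_le_card ({e} : Set M)
  rw [← LinearMap.range_domRestrict]
  apply Submodule.eq_top_of_finrank_eq
  have := Submodule.finrank_le (LinearMap.range (ψ.domRestrict V))
  omega

theorem exists_eq_linear_pow_of_map_eq_top {R M : Type*} [CommSemiring R] [AddCommMonoid M]
    [Module R M] {V : Submodule R M} {ψ : M →ₗ[R] R × R} (hψ : V.map ψ = ⊤) (ℓ : M →ₗ[R] R)
    {G : R → R → R} {n : ℕ} (hG : ∀ v ∈ V, ℓ v ^ n = G (ψ v).1 (ψ v).2) :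
    ∃ a b : R, ∀ y z : R, G y z = (a * y + b * z) ^ n := by
  have hsurj : ∀ p : R × R, ∃ v ∈ V, ψ v = p := fun p => by
    simpa using (hψ ▸ Submodule.mem_top : p ∈ V.map ψ)
  obtain ⟨u, hu, hψu⟩ := hsurj (1, 0)
  obtain ⟨w, hw, hψw⟩ := hsurj (0, 1)
  refine ⟨ℓ u, ℓ w, fun y z => ?_⟩
  have hyz := hG (y • u + z • w) (V.add_mem (V.smul_mem y hu) (V.smul_mem z hw))
  simp only [map_add, map_smul, hψu, hψw, smul_eq_mul, Prod.smul_mk, Prod.mk_add_mk,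
    mul_one, mul_zero, add_zero, zero_add] at hyz
  rw [← hyz]
  ring

theorem exists_eq_linear_pow_of_finrank_eq_three {K : Type*} [Field K] {N : ℕ}
    {V : Submodule K (Fin N → K)} (hV : finrank K V = 3) {i j k : Fin N} {e : Fin N → K}
    (hker : ∀ v ∈ V, v i = 0 → v j = 0 → v ∈ K ∙ e) {G : K → K → K} {n : ℕ}
    (hG : ∀ v ∈ V, v k ^ n = G (v i) (v j)) :
    ∃ a b : K, ∀ y z : K, G y z = (a * y + b * z) ^ n := by
  have hψ : V.map ((LinearMap.proj i).prod (LinearMap.proj j)) = ⊤ :=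
    Submodule.map_eq_top_of_inf_ker_le_span_singleton (by simp [hV])
      fun v ⟨hv, hψv⟩ => hker v hv (congrArg Prod.fst hψv) (congrArg Prod.snd hψv)
  exact exists_eq_linear_pow_of_map_eq_top hψ (LinearMap.proj k) hG

theorem eq_zero_of_forall_add_mul_add_sq_mul_eq_zero {K : Type*} [Field K] [NeZero (2 : K)]
    {a b c : K} (h : ∀ s : K, a + s * b + s ^ 2 * c = 0) : a = 0 ∧ b = 0 ∧ c = 0 := by
  have h₀ := h 0
  have h₁ := h 1
  have h₂ := h (-1)
  have hc : c = 0 :=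
    (mul_eq_zero.mp (by linear_combination h₁ + h₂ - 2 * h₀ : 2 * c = 0)).resolve_left
      two_ne_zero
  exact ⟨by linear_combination h₀, by linear_combination h₁ - h₀ - hc, hc⟩

theorem mem_span_e5 {v : Fin 6 → ℂ} (h0 : v 0 = 0) (h1 : v 1 = 0) (h2 : v 2 = 0)
    (h3 : v 3 = 0) (h4 : v 4 = 0) : v ∈ ℂ ∙ e5 := by
  refine Submodule.mem_span_singleton.mpr ⟨v 5, ?_⟩
  ext i
  fin_cases i <;> simp [e5, *]

theorem eval_fPoly (F : MvPolynomial (Fin 4) ℂ) (t : ℂ) (v : Fin 6 → ℂ) :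
    eval v (fPoly F t) = v 4 ^ 3 - eval ![v 0, v 1, v 2, v 3] F
      + v 5 * (v 0 * v 3 - v 1 * v 2) + t * v 0 * v 5 ^ 2 := by
  have hv : v ∘ Fin.castLE (by norm_num) = ![v 0, v 1, v 2, v 3] := by
    ext i
    fin_cases i <;> rfl
  simp [fPoly, eval_rename, hv]

theorem eval_fPoly_add_smul_e5 (F : MvPolynomial (Fin 4) ℂ) (t : ℂ) (v : Fin 6 → ℂ) (s : ℂ) :
    eval (v + s • e5) (fPoly F t) = eval v (fPoly F t)
      + s * (v 0 * v 3 - v 1 * v 2 + 2 * t * v 0 * v 5) + s ^ 2 * (t * v 0) := by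
  simp only [eval_fPoly, e5, Matrix.smul_cons, smul_eq_mul, mul_zero, mul_one,
    Matrix.smul_empty, Pi.add_apply, Matrix.cons_val, Matrix.cons_val_zero, add_zero]
  ring

theorem coords_of_forall_eval_fPoly_add_smul_e5_eq_zero {F : MvPolynomial (Fin 4) ℂ} {t : ℂ}
    (ht : t ≠ 0) {v : Fin 6 → ℂ} (h : ∀ s : ℂ, eval (v + s • e5) (fPoly F t) = 0) :
    v 0 = 0 ∧ v 1 * v 2 = 0 ∧ v 4 ^ 3 = eval ![0, v 1, v 2, v 3] F := by
  simp only [eval_fPoly_add_smul_e5] at h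
  obtain ⟨hconst, hlin, hquad⟩ := eq_zero_of_forall_add_mul_add_sq_mul_eq_zero h
  have h0 : v 0 = 0 := (mul_eq_zero.mp hquad).resolve_left ht
  have h12 : v 1 * v 2 = 0 := by linear_combination -hlin + (v 3 + 2 * t * v 5) * h0
  rw [eval_fPoly, h0] at hconst
  exact ⟨h0, h12, by linear_combination hconst + v 5 * h12⟩

/-- If neither of the binary cubics `G₁(y,z) = F(0,0,y,z)` and `G₂(y,z) = F(0,y,0,z)`
is proportional to the cube of a linear form, and `t ≠ 0`, then the cyclic cubic
fourfold `Y_{F,t}` contains no plane through the point `p₀`. -/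
theorem stmt13 (F : MvPolynomial (Fin 4) ℂ) (hF : F.IsHomogeneous 3)
    (hG1 : ¬ ∃ c a b : ℂ, ∀ y z : ℂ, eval ![0, 0, y, z] F = c * (a * y + b * z) ^ 3)
    (hG2 : ¬ ∃ c a b : ℂ, ∀ y z : ℂ, eval ![0, y, 0, z] F = c * (a * y + b * z) ^ 3)
    (t : ℂ) (ht : t ≠ 0) :
    ¬ ∃ V : Submodule ℂ (Fin 6 → ℂ), Module.finrank ℂ ↥V = 3 ∧ e5 ∈ V ∧
      ∀ v ∈ V, eval v (fPoly F t) = 0 := by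
  rintro ⟨V, hV, he5, hf⟩
  have hline : ∀ v ∈ V, v 0 = 0 ∧ v 1 * v 2 = 0 ∧ v 4 ^ 3 = eval ![0, v 1, v 2, v 3] F :=
    fun v hv => coords_of_forall_eval_fPoly_add_smul_e5_eq_zero ht
      fun s => hf _ (V.add_mem hv (V.smul_mem s he5))
  have hF0 : eval ![0, 0, 0, 0] F = 0 := by
    rw [show (![0, 0, 0, 0] : Fin 4 → ℂ) = 0 by simp, eval_zero]
    exact hF.coeff_eq_zero (d := 0) (by simp)
  have hker : ∀ v ∈ V, v 1 = 0 → v 2 = 0 → v 3 = 0 → v ∈ ℂ ∙ e5 := fun v hv h1 h2 h3 => by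
    have h4 := (hline v hv).2.2
    rw [h1, h2, h3, hF0] at h4
    exact mem_span_e5 (hline v hv).1 h1 h2 h3 (pow_eq_zero_iff three_ne_zero |>.mp h4)
  rcases Submodule.le_ker_or_le_ker_of_forall_mul_eq_zero (ℓ₁ := LinearMap.proj 1)
    (ℓ₂ := LinearMap.proj 2) fun v hv => (hline v hv).2.1 with h1 | h2
  · obtain ⟨a, b, hab⟩ := exists_eq_linear_pow_of_finrank_eq_three (k := 4) (n := 3)
      (G := fun y z => eval ![0, 0, y, z] F) hV (fun v hv => hker v hv (h1 hv))
      fun v hv => by simpa only [show v 1 = 0 from h1 hv] using (hline v hv).2.2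
    exact hG1 ⟨1, a, b, by simpa using hab⟩
  · obtain ⟨a, b, hab⟩ := exists_eq_linear_pow_of_finrank_eq_three (k := 4) (n := 3)
      (G := fun y z => eval ![0, y, 0, z] F) hV (fun v hv h1 => hker v hv h1 (h2 hv))
      fun v hv => by simpa only [show v 2 = 0 from h2 hv] using (hline v hv).2.2
    exact hG2 ⟨1, a, b, by simpa using hab⟩
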